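/- arXiv:2102.10558 — 4 statements merged into one kernel-verified Lean document; each statement's English description precedes it below -/
import Mathlib

section
/- Let A be an n×n pairwise comparison matrix (all entries positive, a_ji = 1/a_ij for all i, j). If there exist a positive vector w in ℝ^n with A w = n·w, then a_ij = w_i/w_j for all i, j, and consequently A is consistent, i.e., a_ik = a_ij·a_jk for all i, j, k. In other words, the Perron eigenvalue of A equals n only if A is consistent. -/
/-- If `A` is an `n×n` pairwise comparison matrix (positive with
`a_ji = 1/a_ij`) and there exists a positive vector `w` with `A w = n·w`, then
`a_ij = w_i/w_j` for all `i, j`, and consequently `A` is consistent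
(`a_ik = a_ij·a_jk` for all `i, j, k`). -/
theorem perron_eigenvalue_eq_dim_implies_consistent (n : ℕ)
    (A : Matrix (Fin n) (Fin n) ℝ)
    (hApos : ∀ i j, 0 < A i j) (hArec : ∀ i j, A j i = 1 / A i j)
    (w : Fin n → ℝ) (hw : ∀ i, 0 < w i)
    (heig : A.mulVec w = (n : ℝ) • w) :
    (∀ i j, A i j = w i / w j) ∧ (∀ i j k, A i k = A i j * A j k) := by
  have hrow : ∀ i, ∑ j, A i j * w j = (n : ℝ) * w i := by
    intro i
    have := congrFun heig i
    simpa [Matrix.mulVec, dotProduct] using this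
  set B : Fin n × Fin n → ℝ := fun p => A p.1 p.2 * w p.2 / w p.1 with hB
  have hBpos : ∀ p, 0 < B p := by
    intro p
    exact div_pos (mul_pos (hApos _ _) (hw _)) (hw _)
  have hBswap : ∀ p : Fin n × Fin n, B (p.2, p.1) = 1 / B p := by
    intro ⟨i, j⟩
    simp only [hB, hArec i j]
    field_simp
  have hBsum : ∑ p : Fin n × Fin n, B p = (n : ℝ) * n := by
    rw [Fintype.sum_prod_type]
    have : ∀ i : Fin n, ∑ j, B (i, j) = (n : ℝ) := by
      intro i
      show ∑ j, A i j * w j / w i = (n : ℝ)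
      rw [← Finset.sum_div, hrow i, mul_div_assoc, div_self (hw i).ne', mul_one]
    simp [this, Finset.sum_const, mul_comm]
  have hBsum' : ∑ p : Fin n × Fin n, B (p.2, p.1) = (n : ℝ) * n := by
    rw [← hBsum]
    exact Fintype.sum_equiv (Equiv.prodComm _ _) _ _ (fun p => rfl)
  have hle : ∀ p ∈ Finset.univ, (1 : ℝ) ≤ (B p + 1 / B p) / 2 := by
    intro p _
    have h := hBpos p
    have h2 : 0 ≤ (B p - 1)^2 := sq_nonneg _
    rw [le_div_iff₀ (by norm_num), ← sub_nonneg]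
    have : B p * (B p + 1 / B p - 2) = (B p - 1)^2 := by field_simp; ring
    nlinarith
  have hsum_eq : ∑ p : Fin n × Fin n, (B p + 1 / B p) / 2
      = ∑ p : Fin n × Fin n, (1 : ℝ) := by
    have : ∑ p : Fin n × Fin n, (1 / B p) = (n : ℝ) * n := by
      rw [← hBsum']
      exact Finset.sum_congr rfl fun p _ => (hBswap p).symm
    rw [← Finset.sum_div, Finset.sum_add_distrib, hBsum, this]
    simp [Finset.card_univ]
  have hall : ∀ p ∈ (Finset.univ : Finset (Fin n × Fin n)),
      (B p + 1 / B p) / 2 = 1 := by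
    have := (Finset.sum_eq_sum_iff_of_le hle).mp hsum_eq.symm
    intro p hp
    exact (this p hp).symm
  have hB1 : ∀ p : Fin n × Fin n, B p = 1 := by
    intro p
    have h := hall p (Finset.mem_univ p)
    have hpos := hBpos p
    have hinv : B p * (1 / B p) = 1 := mul_one_div_cancel hpos.ne'
    have hsq : (B p - 1)^2 = 0 := by nlinarith [hinv]
    have := pow_eq_zero_iff (n := 2) (by norm_num) |>.mp hsq
    linarith
  have hAij : ∀ i j, A i j = w i / w j := by
    intro i j
    have h := hB1 (i, j)
    simp only [hB] at h
    have hwj := (hw j).ne'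
    have hwi := (hw i).ne'
    field_simp at h ⊢
    linarith
  refine ⟨hAij, fun i j k => ?_⟩
  rw [hAij, hAij, hAij]
  rw [div_mul_div_comm, div_eq_div_iff (hw k).ne' (mul_pos (hw j) (hw k)).ne']
  ring
end

section
/- Let A and B be two consistent n×n real matrices with all positive entries (a_ik = a_ij·a_jk for all i, j, k, and similarly for B), and let G be a connected simple graph on the index set {1, …, n}. If a_ij = b_ij for every edge {i, j} of G, then A = B. In particular, an incomplete pairwise comparison matrix whose graph representation is connected admits at most one consistent completion. -/
/-- Two positive consistent `n×n` matrices that agree on the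
edges of a connected simple graph on the index set are equal. In particular,
an incomplete pairwise comparison matrix whose graph representation is
connected admits at most one consistent completion. -/
theorem consistent_completion_unique (n : ℕ)
    (A B : Matrix (Fin n) (Fin n) ℝ)
    (hApos : ∀ i j, 0 < A i j) (hBpos : ∀ i j, 0 < B i j)
    (hAcons : ∀ i j k, A i k = A i j * A j k)
    (hBcons : ∀ i j k, B i k = B i j * B j k)
    (G : SimpleGraph (Fin n)) (hG : G.Connected)
    (hagree : ∀ i j, G.Adj i j → A i j = B i j) :
    A = B := by
  have hA1 : ∀ i, A i i = 1 := by
    intro i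
    have h := hAcons i i i
    nlinarith [hApos i i]
  have hB1 : ∀ i, B i i = 1 := by
    intro i
    have h := hBcons i i i
    nlinarith [hBpos i i]
  have key : ∀ i j, G.Reachable i j → A i j = B i j := by
    intro i j h
    obtain ⟨w⟩ := h
    induction w with
    | nil => rw [hA1, hB1]
    | @cons u v w h p ih =>
      rw [hAcons u v w, hBcons u v w, hagree u v h, ih]
  ext i j
  exact key i j (hG.preconnected i j)
end

section
/- Let T be a tree (connected acyclic simple graph) on vertex set {1, …, n}, and let positive real values a_ij be assigned to the ordered pairs corresponding to the edges of T such that a_ji = 1/a_ij for every edge {i, j}. Then there exists a unique consistent n×n positive matrix B (b_ik = b_ij·b_jk for all i, j, k) with b_ij = a_ij for every edge {i, j} of T. In other words, an incomplete pairwise comparison matrix whose graph representation is a spanning tree can be filled out consistently in exactly one way. -/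
namespace STree12

open SimpleGraph

variable {V : Type*} {G : SimpleGraph V}

/-- Multiplicative weight of a walk. -/
def wgt (a : V → V → ℝ) : {u v : V} → G.Walk u v → ℝ
  | _, _, .nil => 1
  | u, _, .cons (v := x) _ p => a u x * wgt a p

@[simp] lemma wgt_nil (a : V → V → ℝ) {u : V} :
    wgt a (SimpleGraph.Walk.nil : G.Walk u u) = 1 := rfl

@[simp] lemma wgt_cons (a : V → V → ℝ) {u x v : V} (h : G.Adj u x) (p : G.Walk x v) :
    wgt a (SimpleGraph.Walk.cons h p) = a u x * wgt a p := rfl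

lemma wgt_append (a : V → V → ℝ) {u v w : V} (p : G.Walk u v) (q : G.Walk v w) :
    wgt a (p.append q) = wgt a p * wgt a q := by
  induction p with
  | nil => simp
  | cons h p ih => simp [ih, mul_assoc]

lemma wgt_pos {a : V → V → ℝ} (hapos : ∀ i j, G.Adj i j → 0 < a i j)
    {u v : V} (p : G.Walk u v) : 0 < wgt a p := by
  induction p with
  | nil => simp
  | cons h p ih => simpa using mul_pos (hapos _ _ h) ih

/-- Any positive consistent matrix agreeing with `a` on edges equals the walk
weight along any walk. -/
lemma consistent_eq_wgt {a : V → V → ℝ} (B : V → V → ℝ)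
    (hpos : ∀ i j, 0 < B i j)
    (hcons : ∀ i j k, B i k = B i j * B j k)
    (hedge : ∀ i j, G.Adj i j → B i j = a i j)
    {u v : V} (p : G.Walk u v) : B u v = wgt a p := by
  induction p with
  | nil =>
    rename_i w
    simp only [wgt_nil]
    exact (mul_left_cancel₀ (hpos w w).ne'
      (by rw [mul_one]; exact hcons w w w)).symm
  | @cons x y z h p ih =>
    rw [wgt_cons, hcons x y z, hedge x y h, ih]

end STree12

/-- Let `T` be a tree on `{1, …, n}` and let positive reciprocal
values `a_ij` be given on the edges of `T` (`a_ji = 1/a_ij` for each edge).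
Then there is a unique consistent positive `n×n` matrix `B`
(`b_ik = b_ij·b_jk`) with `b_ij = a_ij` on every edge of `T`: an incomplete
pairwise comparison matrix whose graph representation is a spanning tree can
be filled out consistently in exactly one way. -/
theorem spanning_tree_unique_consistent_completion (n : ℕ)
    (T : SimpleGraph (Fin n)) (hT : T.IsTree)
    (a : Fin n → Fin n → ℝ)
    (hapos : ∀ i j, T.Adj i j → 0 < a i j)
    (harec : ∀ i j, T.Adj i j → a j i = 1 / a i j) :
    ∃! B : Matrix (Fin n) (Fin n) ℝ,
      (∀ i j, 0 < B i j) ∧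
      (∀ i j k, B i k = B i j * B j k) ∧
      (∀ i j, T.Adj i j → B i j = a i j) := by
  classical
  open STree12 SimpleGraph in
  have hconn := hT.isConnected
  have hne : Nonempty (Fin n) := hconn.nonempty
  obtain ⟨root⟩ := hne
  -- unique paths
  have huniq : ∀ ⦃v w : Fin n⦄ (p q : T.Walk v w), p.IsPath → q.IsPath → p = q := by
    intro v w p q hp hq
    have := (SimpleGraph.isAcyclic_iff_path_unique.mp hT.IsAcyclic) (⟨p, hp⟩ : T.Path v w) ⟨q, hq⟩
    exact congrArg Subtype.val this
  have hPex : ∀ v : Fin n, ∃ p : T.Walk root v, p.IsPath := by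
    intro v
    obtain ⟨p⟩ := hconn.preconnected root v
    exact ⟨p.toPath.1, p.toPath.2⟩
  choose P hP using hPex
  set f : Fin n → ℝ := fun v => STree12.wgt a (P v) with hf
  have hfpos : ∀ v, 0 < f v := fun v => STree12.wgt_pos hapos (P v)
  -- key edge relation: f j = f i * a i j for each edge (i,j)
  have hkey : ∀ i j, T.Adj i j → f j = f i * a i j := by
    intro i j hij
    by_cases hjmem : j ∈ (P i).support
    · -- split the path to i at j
      have hsplit := (P i).take_spec hjmem
      have htake : ((P i).takeUntil j hjmem).IsPath := (hP i).takeUntil hjmem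
      have hdrop : ((P i).dropUntil j hjmem).IsPath := (hP i).dropUntil hjmem
      have h1 : (P i).takeUntil j hjmem = P j := huniq _ _ htake (hP j)
      have h2 : (P i).dropUntil j hjmem =
          SimpleGraph.Walk.cons hij.symm SimpleGraph.Walk.nil := by
        apply huniq _ _ hdrop
        rw [SimpleGraph.Walk.cons_isPath_iff]
        refine ⟨SimpleGraph.Walk.IsPath.nil, ?_⟩
        simp [hij.ne']
      have : f i = f j * a j i := by
        have := congrArg (STree12.wgt a) hsplit
        rw [STree12.wgt_append] at this
        rw [h1, h2] at this
        simp only [STree12.wgt_cons, STree12.wgt_nil, mul_one] at this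
        simpa [hf] using this.symm
      rw [this, harec i j hij]
      have ha := (hapos i j hij).ne'
      field_simp
    · -- extend the path to i by the edge (i,j)
      have hcpath : ((P i).concat hij).IsPath := by
        rw [← SimpleGraph.Walk.isPath_reverse_iff, SimpleGraph.Walk.reverse_concat,
          SimpleGraph.Walk.cons_isPath_iff]
        refine ⟨(SimpleGraph.Walk.isPath_reverse_iff _).mpr (hP i), ?_⟩
        simpa using hjmem
      have h1 : (P i).concat hij = P j := huniq _ _ hcpath (hP j)
      have := congrArg (STree12.wgt a) h1
      rw [SimpleGraph.Walk.concat_eq_append, STree12.wgt_append] at this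
      simp only [STree12.wgt_cons, STree12.wgt_nil, mul_one] at this
      simpa [hf] using this.symm
  -- the matrix
  refine ⟨Matrix.of (fun i j => f j / f i), ⟨?_, ?_, ?_⟩, ?_⟩
  · intro i j
    exact div_pos (hfpos j) (hfpos i)
  · intro i j k
    simp only [Matrix.of_apply]
    rw [div_mul_div_comm, mul_comm (f j) (f k), mul_div_mul_right _ _ (hfpos j).ne']
  · intro i j hij
    have := (hfpos i).ne'
    simp only [Matrix.of_apply]
    rw [hkey i j hij]
    field_simp
  · -- uniqueness
    intro B ⟨hBpos, hBcons, hBedge⟩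
    funext i j
    have walkij : T.Walk i j := ((P i).reverse.append (P j))
    have hB : B i j = STree12.wgt a walkij :=
      STree12.consistent_eq_wgt (fun i j => B i j) hBpos hBcons hBedge walkij
    have hB' : (Matrix.of (fun i j => f j / f i) : Matrix (Fin n) (Fin n) ℝ) i j
        = STree12.wgt a walkij := by
      refine STree12.consistent_eq_wgt _ ?_ ?_ ?_ walkij
      · intro i j; exact div_pos (hfpos j) (hfpos i)
      · intro i j k
        simp only [Matrix.of_apply]
        rw [div_mul_div_comm, mul_comm (f j) (f k), mul_div_mul_right _ _ (hfpos j).ne']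
      · intro i j hij
        have := (hfpos i).ne'
        simp only [Matrix.of_apply]
        rw [hkey i j hij]
        field_simp
    rw [hB, hB']
end

section
/- Let A be an incomplete n×n pairwise comparison matrix whose graph representation is a spanning tree, and suppose the missing entries may be filled with arbitrary positive real values (Method 1). Then there exists a completion B of A and a positive vector w ∈ ℝ^n such that B w = n·w; hence the minimum of λ_max over all positive completions equals n and the optimal consistency index CI = (λ_max − n)/(n − 1) equals 0. -/
/-- The Perron (maximal) eigenvalue of a matrix, defined as the supremum of its
real eigenvalues; for a positive matrix this is the spectral radius. -/
noncomputable def lambdaMax {n : ℕ} (A : Matrix (Fin n) (Fin n) ℝ) : ℝ :=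
  sSup {t : ℝ | ∃ v : Fin n → ℝ, v ≠ 0 ∧ A.mulVec v = t • v}

/-- The completion `A(x)` of an incomplete pairwise comparison matrix `A`
whose missing entries above the diagonal are the positions in `miss`: each
missing entry `(i,j)` is filled with `x (i,j)` and the corresponding entry
below the diagonal with its reciprocal. -/
noncomputable def fillMatrix {n : ℕ} (A : Matrix (Fin n) (Fin n) ℝ)
    (miss : Finset (Fin n × Fin n)) (x : Fin n × Fin n → ℝ) :
    Matrix (Fin n) (Fin n) ℝ :=
  fun i j =>
    if (i, j) ∈ miss then x (i, j)
    else if (j, i) ∈ miss then 1 / x (j, i)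
    else A i j

/-- The graph representation of an incomplete pairwise comparison matrix:
`i ≠ j` are adjacent iff the entry at `(i,j)` is known (not missing). -/
def repGraph (n : ℕ) (miss : Finset (Fin n × Fin n)) : SimpleGraph (Fin n) :=
  SimpleGraph.fromRel (fun i j => (i, j) ∉ miss ∧ (j, i) ∉ miss)

/-! A positive reciprocal matrix whose graph of known entries is a spanning tree can be completed
consistently: fixing a root, the potential `w i` = product of the known ratios along the unique
tree path to `i` satisfies `a_ij = w_i / w_j` on every edge, so `(w_i / w_j)` is a completion
with eigenvector `w` and eigenvalue `n`. Conversely every positive reciprocal completion has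
`λ_max ≥ n`: by Perron's theorem `λ_max` has a positive eigenvector `u`, and summing the
reciprocal pairs `a_ij u_j / u_i + a_ji u_i / u_j ≥ 2` over all `i, j` gives `n λ_max ≥ n²`. -/

open Finset Matrix

section Spectral

variable {ι : Type*} [Fintype ι] {C : Matrix ι ι ℝ}

theorem mulVec_pos_of_pos {v : ι → ℝ} (hC : ∀ i j, 0 < C i j) (hv : 0 ≤ v) (hv0 : v ≠ 0)
    (i : ι) : 0 < (C *ᵥ v) i := by
  obtain ⟨j, hj⟩ := Function.ne_iff.mp hv0
  exact sum_pos' (fun k _ => mul_nonneg (hC i k).le (hv k))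
    ⟨j, mem_univ j, mul_pos (hC i j) (lt_of_le_of_ne (hv j) (Ne.symm hj))⟩

theorem exists_pos_eigenvector_of_pos [Nonempty ι] (hC : ∀ i j, 0 < C i j) :
    ∃ (r : ℝ) (u : ι → ℝ), (∀ i, 0 < u i) ∧ C *ᵥ u = r • u := by
  set K := (C *ᵥ ·) '' stdSimplex ℝ ι
  have hK : IsCompact K :=
    (isCompact_stdSimplex ℝ ι).image (continuous_const.matrix_mulVec continuous_id)
  have hKpos : ∀ u ∈ K, ∀ i, 0 < u i := by
    rintro _ ⟨v, hv, rfl⟩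
    refine mulVec_pos_of_pos hC hv.1 ?_
    rintro rfl
    simpa using hv.2
  -- The Collatz–Wielandt function; it is continuous on `K` because `K` consists of positive
  -- vectors, which is why `C '' Δ` is used instead of the simplex `Δ` itself.
  set M : (ι → ℝ) → ℝ := fun u => univ.inf' univ_nonempty fun i => (C *ᵥ u) i / u i
  have hM : ContinuousOn M K :=
    ContinuousOn.finset_inf'_apply _ fun i _ =>
      ContinuousOn.div (by fun_prop) (by fun_prop) fun u hu => (hKpos u hu i).ne'
  obtain ⟨u, hu, hmax⟩ := hK.exists_isMaxOn
    ((isPathConnected_stdSimplex ι).nonempty.image _) hM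
  have hupos := hKpos u hu
  refine ⟨M u, u, hupos, ?_⟩
  have hle : 0 ≤ C *ᵥ u - M u • u := fun i => by
    have := (le_div_iff₀ (hupos i)).1 (inf'_le (fun i => (C *ᵥ u) i / u i) (mem_univ i))
    simpa using this
  by_contra hne
  -- If `C u ≠ M u • u`, then `C (C u - M u • u) > 0`, so `C u` has a strictly larger value of `M`.
  have hlt : ∀ i, M u * (C *ᵥ u) i < (C *ᵥ (C *ᵥ u)) i := fun i => by
    have := mulVec_pos_of_pos hC hle (sub_ne_zero.mpr hne) i
    simpa [mulVec_sub, mulVec_smul] using this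
  set s := ∑ i, u i
  have hs : 0 < s := sum_pos (fun i _ => hupos i) univ_nonempty
  have hu' : C *ᵥ (s⁻¹ • u) ∈ K :=
    ⟨s⁻¹ • u, ⟨fun i => mul_nonneg (inv_nonneg.2 hs.le) (hupos i).le,
      by simp [← mul_sum, s, hs.ne']⟩, rfl⟩
  have hMle : M (C *ᵥ (s⁻¹ • u)) ≤ M u := hmax hu'
  refine hMle.not_gt ((lt_inf'_iff _).2 fun i _ => ?_)
  have hCu : 0 < (C *ᵥ u) i :=
    mulVec_pos_of_pos hC (fun j => (hupos j).le) (fun h => (hupos i).ne' (congrFun h i)) i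
  simp only [mulVec_smul, Pi.smul_apply, smul_eq_mul]
  rw [mul_div_mul_left _ _ (inv_ne_zero hs.ne'), lt_div_iff₀ hCu]
  exact hlt i

theorem abs_le_of_pos_eigenvector (hC : ∀ i j, 0 ≤ C i j) {w v : ι → ℝ} {r t : ℝ}
    (hw : ∀ i, 0 < w i) (hCw : C *ᵥ w = r • w) (hv : v ≠ 0) (hCv : C *ᵥ v = t • v) :
    |t| ≤ r := by
  obtain ⟨j, hj⟩ := Function.ne_iff.mp hv
  obtain ⟨k, -, hk⟩ := exists_max_image univ (fun i => |v i| / w i) ⟨j, mem_univ j⟩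
  set m := |v k| / w k
  have hvk : 0 < |v k| := by
    have : 0 < |v j| / w j := div_pos (abs_pos.2 hj) (hw j)
    exact (div_pos_iff_of_pos_right (hw k)).1 (this.trans_le (hk j (mem_univ j)))
  have hbound : ∀ i, |v i| ≤ m * w i := fun i => (div_le_iff₀ (hw i)).1 (hk i (mem_univ i))
  refine le_of_mul_le_mul_right ?_ hvk
  calc |t| * |v k| = |∑ i, C k i * v i| := by
        rw [← abs_mul, ← smul_eq_mul, ← Pi.smul_apply, ← hCv]; rfl
    _ ≤ ∑ i, C k i * |v i| :=
        (abs_sum_le_sum_abs _ _).trans_eq (sum_congr rfl fun i _ => by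
          rw [abs_mul, abs_of_nonneg (hC k i)])
    _ ≤ ∑ i, C k i * (m * w i) :=
        sum_le_sum fun i _ => mul_le_mul_of_nonneg_left (hbound i) (hC k i)
    _ = m * (C *ᵥ w) k := by
        simp only [mulVec, dotProduct, mul_sum]
        exact sum_congr rfl fun i _ => by ring
    _ = r * |v k| := by
        rw [hCw, Pi.smul_apply, smul_eq_mul]
        simp only [m]
        field_simp [(hw k).ne']

theorem card_le_of_reciprocal_eigenvector [Nonempty ι] (hC : ∀ i j, 0 < C i j)
    (hrec : ∀ i j, C j i = 1 / C i j) {u : ι → ℝ} {r : ℝ} (hu : ∀ i, 0 < u i)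
    (hCu : C *ᵥ u = r • u) : (Fintype.card ι : ℝ) ≤ r := by
  set f : ι → ι → ℝ := fun i j => C i j * u j / u i
  have hrow : ∀ i, ∑ j, f i j = r := fun i => by
    have := congrFun hCu i
    simp only [mulVec, dotProduct, Pi.smul_apply, smul_eq_mul] at this
    simp only [f, ← sum_div, this]
    field_simp [(hu i).ne']
  have hpair : ∀ i j, 2 ≤ f i j + f j i := fun i j => by
    have hfpos : 0 < f i j := div_pos (mul_pos (hC i j) (hu j)) (hu i)
    have hinv : f i j * f j i = 1 := by
      simp only [f, hrec i j]
      field_simp [(hC i j).ne', (hu i).ne', (hu j).ne']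
    nlinarith [sq_nonneg (f i j - 1)]
  have hcard : (0 : ℝ) < Fintype.card ι := by exact_mod_cast Fintype.card_pos
  refine le_of_mul_le_mul_left ?_ (mul_pos two_pos hcard)
  calc 2 * Fintype.card ι * (Fintype.card ι : ℝ) = ∑ i : ι, ∑ j : ι, (2 : ℝ) := by
        simp only [sum_const, card_univ, nsmul_eq_mul]
        ring
    _ ≤ ∑ i, ∑ j, (f i j + f j i) := sum_le_sum fun i _ => sum_le_sum fun j _ => hpair i j
    _ = 2 * Fintype.card ι * r := by
        simp only [sum_add_distrib]
        rw [sum_comm (f := fun i j => f j i)]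
        simp only [hrow, sum_const, card_univ, nsmul_eq_mul]
        ring

end Spectral

theorem lambdaMax_eq_of_pos_eigenvector {n : ℕ} [NeZero n] {C : Matrix (Fin n) (Fin n) ℝ}
    (hC : ∀ i j, 0 ≤ C i j) {w : Fin n → ℝ} {r : ℝ} (hw : ∀ i, 0 < w i)
    (hCw : C *ᵥ w = r • w) : lambdaMax C = r :=
  IsGreatest.csSup_eq ⟨⟨w, fun h => (hw 0).ne' (congrFun h 0), hCw⟩,
    fun _ ⟨_, hv, hCv⟩ => (le_abs_self _).trans (abs_le_of_pos_eigenvector hC hw hCw hv hCv)⟩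

theorem le_lambdaMax_of_reciprocal {n : ℕ} [NeZero n] {C : Matrix (Fin n) (Fin n) ℝ}
    (hC : ∀ i j, 0 < C i j) (hrec : ∀ i j, C j i = 1 / C i j) : (n : ℝ) ≤ lambdaMax C := by
  obtain ⟨r, u, hu, hCu⟩ := exists_pos_eigenvector_of_pos hC
  rw [lambdaMax_eq_of_pos_eigenvector (fun i j => (hC i j).le) hu hCu]
  simpa using card_le_of_reciprocal_eigenvector hC hrec hu hCu

namespace SimpleGraph

variable {V : Type*} {G : SimpleGraph V}

-- The dart `x → y` is weighted by `a y x`, so that along a path from a root `w y = a y x * w x`.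
noncomputable def Walk.dartProd (a : V → V → ℝ) {u v : V} (p : G.Walk u v) : ℝ :=
  (p.darts.map fun d => a d.snd d.fst).prod

theorem Walk.dartProd_concat (a : V → V → ℝ) {u v w : V} (p : G.Walk u v) (h : G.Adj v w) :
    (p.concat h).dartProd a = p.dartProd a * a w v := by
  simp [dartProd]

theorem Walk.dartProd_pos {a : V → V → ℝ} (ha : ∀ i j, G.Adj i j → 0 < a i j) {u v : V}
    (p : G.Walk u v) : 0 < p.dartProd a :=
  List.prod_pos <| by simpa [dartProd] using fun d _ => ha _ _ d.adj.symm

theorem IsTree.exists_pos_potential (hG : G.IsTree) {a : V → V → ℝ}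
    (hpos : ∀ i j, G.Adj i j → 0 < a i j) (hrec : ∀ i j, G.Adj i j → a j i = 1 / a i j) :
    ∃ w : V → ℝ, (∀ i, 0 < w i) ∧ ∀ i j, G.Adj i j → w i = a i j * w j := by
  classical
  obtain ⟨r⟩ := hG.connected.nonempty
  choose P hP using fun i => (hG.existsUnique_path r i).exists
  refine ⟨fun i => (P i).dartProd a, fun i => Walk.dartProd_pos hpos _, fun i j h => ?_⟩
  show (P i).dartProd a = a i j * (P j).dartProd a
  -- Of two adjacent vertices, the path from the root to one extends the path to the other.
  by_cases hj : j ∈ (P i).support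
  · rw [hG.isAcyclic.path_concat (hP j) (hP i) h.symm hj, Walk.dartProd_concat, mul_comm]
  · have hi : i ∈ (P j).support :=
      hG.isAcyclic.mem_support_of_ne_mem_support_of_adj_of_isPath (hP j) (hP i) h.symm hj
    rw [hG.isAcyclic.path_concat (hP i) (hP j) h hi, Walk.dartProd_concat, hrec i j h]
    field_simp [(hpos i j h).ne']

end SimpleGraph

theorem vecMulVec_inv_mulVec_self {ι : Type*} [Fintype ι] {w : ι → ℝ} (hw : ∀ i, w i ≠ 0) :
    vecMulVec w w⁻¹ *ᵥ w = (Fintype.card ι : ℝ) • w := by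
  ext i
  simp [vecMulVec_mulVec, dotProduct, hw, mul_comm]

section Completion

variable {n : ℕ} {A : Matrix (Fin n) (Fin n) ℝ} {miss : Finset (Fin n × Fin n)}

theorem repGraph_adj {i j : Fin n} :
    (repGraph n miss).Adj i j ↔ i ≠ j ∧ (i, j) ∉ miss ∧ (j, i) ∉ miss := by
  simp only [repGraph, SimpleGraph.fromRel_adj]
  tauto

theorem fillMatrix_pos (hApos : ∀ i j, (i, j) ∉ miss → (j, i) ∉ miss → 0 < A i j)
    {x : Fin n × Fin n → ℝ} (hx : ∀ p ∈ miss, 0 < x p) (i j : Fin n) :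
    0 < fillMatrix A miss x i j := by
  unfold fillMatrix
  split_ifs with h1 h2
  · exact hx _ h1
  · exact one_div_pos.2 (hx _ h2)
  · exact hApos i j h1 h2

theorem fillMatrix_reciprocal (hmiss : ∀ p ∈ miss, p.1 < p.2)
    (hArec : ∀ i j, (i, j) ∉ miss → (j, i) ∉ miss → A j i = 1 / A i j)
    (x : Fin n × Fin n → ℝ) (i j : Fin n) :
    fillMatrix A miss x j i = 1 / fillMatrix A miss x i j := by
  unfold fillMatrix
  by_cases h1 : (i, j) ∈ miss
  · have h2 : (j, i) ∉ miss := fun h2 => (hmiss _ h1).not_gt (hmiss _ h2)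
    simp [h1, h2]
  · by_cases h2 : (j, i) ∈ miss
    · simp [h1, h2]
    · simp [h1, h2, hArec i j h1 h2]

theorem fillMatrix_eq_vecMulVec (hApos : ∀ i j, (i, j) ∉ miss → (j, i) ∉ miss → 0 < A i j)
    (hArec : ∀ i j, (i, j) ∉ miss → (j, i) ∉ miss → A j i = 1 / A i j)
    {w : Fin n → ℝ} (hw : ∀ i, 0 < w i)
    (hwA : ∀ i j, (repGraph n miss).Adj i j → w i = A i j * w j) :
    fillMatrix A miss (fun p => w p.1 / w p.2) = vecMulVec w w⁻¹ := by
  ext i j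
  simp only [fillMatrix, vecMulVec_apply, Pi.inv_apply, ← div_eq_mul_inv]
  split_ifs with h1 h2
  · rfl
  · exact one_div_div _ _
  · obtain rfl | hij := eq_or_ne i j
    · have hAii : A i i * A i i = 1 := by
        have := hArec i i h1 h1
        rwa [eq_div_iff (hApos i i h1 h1).ne'] at this
      rw [div_self (hw i).ne',
        (mul_self_eq_one_iff.1 hAii).resolve_right (by linarith [hApos i i h1 h1])]
    · rw [hwA i j (repGraph_adj.2 ⟨hij, h1, h2⟩)]
      field_simp [(hw j).ne']

end Completion

/-- If the graph representation of an incomplete `n×n` pairwise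
comparison matrix `A` is a spanning tree and missing entries may be arbitrary
positive reals (Method 1), then there is a completion `B` of `A` and a positive
vector `w` with `B w = n·w`; hence the minimum of `λ_max` over all positive
completions equals `n` and the optimal consistency index
`CI = (λ_max − n)/(n − 1)` equals `0`. -/
theorem spanning_tree_optimal_completion (n : ℕ)
    (A : Matrix (Fin n) (Fin n) ℝ)
    (miss : Finset (Fin n × Fin n)) (hmiss : ∀ p ∈ miss, p.1 < p.2)
    (hApos : ∀ i j, (i, j) ∉ miss → (j, i) ∉ miss → 0 < A i j)
    (hArec : ∀ i j, (i, j) ∉ miss → (j, i) ∉ miss → A j i = 1 / A i j)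
    (htree : (repGraph n miss).IsTree) :
    (∃ B : Matrix (Fin n) (Fin n) ℝ,
      (∀ i j, 0 < B i j) ∧ (∀ i j, B j i = 1 / B i j) ∧
      (∀ i j, (i, j) ∉ miss → (j, i) ∉ miss → B i j = A i j) ∧
      ∃ w : Fin n → ℝ, (∀ i, 0 < w i) ∧ B.mulVec w = (n : ℝ) • w) ∧
    sInf ((fun x => lambdaMax (fillMatrix A miss x)) ''
        {x | ∀ p ∈ miss, 0 < x p}) = n ∧
    (sInf ((fun x => lambdaMax (fillMatrix A miss x)) ''
        {x | ∀ p ∈ miss, 0 < x p}) - n) / ((n : ℝ) - 1) = 0 := by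
  have : NeZero n := ⟨fun h => by subst h; exact htree.connected.nonempty.elim Fin.elim0⟩
  obtain ⟨w, hw, hwA⟩ := htree.exists_pos_potential (a := A)
    (fun i j h => hApos i j (repGraph_adj.1 h).2.1 (repGraph_adj.1 h).2.2)
    (fun i j h => hArec i j (repGraph_adj.1 h).2.1 (repGraph_adj.1 h).2.2)
  set x₀ : Fin n × Fin n → ℝ := fun p => w p.1 / w p.2
  have hx₀ : ∀ p ∈ miss, 0 < x₀ p := fun p _ => div_pos (hw _) (hw _)
  have hBw : fillMatrix A miss x₀ *ᵥ w = (n : ℝ) • w := by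
    rw [fillMatrix_eq_vecMulVec hApos hArec hw hwA]
    simpa using vecMulVec_inv_mulVec_self fun i => (hw i).ne'
  have hmin : IsLeast ((fun x => lambdaMax (fillMatrix A miss x)) ''
      {x | ∀ p ∈ miss, 0 < x p}) n := by
    refine ⟨⟨x₀, hx₀, ?_⟩, ?_⟩
    · exact lambdaMax_eq_of_pos_eigenvector (fun i j => (fillMatrix_pos hApos hx₀ i j).le) hw hBw
    · rintro _ ⟨x, hx, rfl⟩
      exact le_lambdaMax_of_reciprocal (fillMatrix_pos hApos hx)
        (fillMatrix_reciprocal hmiss hArec x)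
  refine ⟨⟨_, fillMatrix_pos hApos hx₀, fillMatrix_reciprocal hmiss hArec x₀,
    fun i j h1 h2 => by simp [fillMatrix, h1, h2], w, hw, hBw⟩, hmin.csInf_eq, ?_⟩
  rw [hmin.csInf_eq, sub_self, zero_div]
end
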